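/- arXiv:1104.3447 — 4 statements merged into one kernel-verified Lean document; each statement's English description precedes it below -/
import Mathlib

section
/- For every integer n ≥ 1 and every real t > 0, a_n(t) ≤ (π t)^{n/2} · exp(−(n/2)·(log(n/2) − 1)). -/
open MeasureTheory

/-- `a_n(t) = ∫_{[0,t]^n} 1{s₁+⋯+sₙ ≤ t} ∏ᵢ sᵢ^{-1/2} ds` (Lebesgue/Bochner integral with
respect to the volume on `Fin n → ℝ`). -/
noncomputable def aFun (n : ℕ) (t : ℝ) : ℝ :=
  ∫ s in Set.univ.pi (fun _ : Fin n => Set.Icc (0 : ℝ) t),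
    (if (∑ i, s i) ≤ t then ∏ i, (s i) ^ (-(1 : ℝ) / 2) else 0)

/-!
Exponential tilting: for `λ > 0`, the indicator of `s₁ + ⋯ + sₙ ≤ t` is at most
`exp (λ (t - ∑ sᵢ))`, which factorises, so
`a_n(t) ≤ e^{λt} (∫₀^∞ x^{-1/2} e^{-λx} dx)^n = e^{λt} (π/λ)^{n/2}`.
The choice `λ = n / (2t)` minimises the right-hand side and gives the bound.
-/

open Real Set

noncomputable def tiltedDensity (l : ℝ) : ℝ → ℝ :=
  (Ioi 0).indicator fun x => x ^ (-(1 : ℝ) / 2) * exp (-(l * x))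

lemma tiltedDensity_nonneg (l x : ℝ) : 0 ≤ tiltedDensity l x :=
  indicator_nonneg (fun y (hy : 0 < y) => by positivity) x

-- At `x = 0` both sides vanish, since `0 ^ (-1/2) = 0`.
lemma tiltedDensity_of_nonneg (l : ℝ) {x : ℝ} (hx : 0 ≤ x) :
    tiltedDensity l x = x ^ (-(1 : ℝ) / 2) * exp (-(l * x)) := by
  rcases hx.lt_or_eq with hx | rfl
  · exact indicator_of_mem hx _
  · simp [tiltedDensity, zero_rpow (show -(1 : ℝ) / 2 ≠ 0 by norm_num)]

lemma integral_rpow_neg_half_mul_exp_neg_mul_Ioi {l : ℝ} (hl : 0 < l) :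
    ∫ x in Ioi 0, x ^ (-(1 : ℝ) / 2) * exp (-(l * x)) = (π / l) ^ ((1 : ℝ) / 2) := by
  have := integral_rpow_mul_exp_neg_mul_Ioi (a := 1 / 2) (by norm_num) hl
  rw [Gamma_one_half_eq, sqrt_eq_rpow, ← mul_rpow (by positivity) pi_pos.le, one_div_mul_eq_div]
    at this
  convert this using 3
  norm_num

lemma integral_tiltedDensity {l : ℝ} (hl : 0 < l) :
    ∫ x, tiltedDensity l x = (π / l) ^ ((1 : ℝ) / 2) := by
  rw [tiltedDensity, integral_indicator measurableSet_Ioi,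
    integral_rpow_neg_half_mul_exp_neg_mul_Ioi hl]

lemma integrable_tiltedDensity {l : ℝ} (hl : 0 < l) : Integrable (tiltedDensity l) := by
  refine .of_integral_ne_zero ?_
  rw [integral_tiltedDensity hl]
  positivity

lemma prod_rpow_neg_half_le_exp_mul_prod_tiltedDensity {ι : Type*} [Fintype ι] {s : ι → ℝ}
    {t l : ℝ} (hs : ∀ i, 0 ≤ s i) (hsum : ∑ i, s i ≤ t) (hl : 0 ≤ l) :
    ∏ i, s i ^ (-(1 : ℝ) / 2) ≤ exp (l * t) * ∏ i, tiltedDensity l (s i) := by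
  have hprod :
      ∏ i, tiltedDensity l (s i) = exp (-(l * ∑ i, s i)) * ∏ i, s i ^ (-(1 : ℝ) / 2) := by
    simp_rw [tiltedDensity_of_nonneg l (hs _), Finset.prod_mul_distrib, ← exp_sum,
      Finset.mul_sum, Finset.sum_neg_distrib, mul_comm]
  rw [hprod, ← mul_assoc, ← exp_add]
  refine le_mul_of_one_le_left (Finset.prod_nonneg fun i _ => rpow_nonneg (hs i) _) ?_
  exact one_le_exp (by nlinarith)

theorem aFun_le_exp_mul_rpow (n : ℕ) (t : ℝ) {l : ℝ} (hl : 0 < l) :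
    aFun n t ≤ exp (l * t) * (π / l) ^ ((n : ℝ) / 2) := by
  set G : (Fin n → ℝ) → ℝ := fun s => exp (l * t) * ∏ i, tiltedDensity l (s i)
  have hG_nonneg (s : Fin n → ℝ) : 0 ≤ G s :=
    mul_nonneg (exp_pos _).le (Finset.prod_nonneg fun i _ => tiltedDensity_nonneg _ _)
  have hG : Integrable G :=
    (Integrable.fintype_prod fun _ => integrable_tiltedDensity hl).const_mul _
  have hS : MeasurableSet (univ.pi fun _ : Fin n => Icc (0 : ℝ) t) :=
    .univ_pi fun _ => measurableSet_Icc
  calc aFun n t ≤ ∫ s in univ.pi fun _ => Icc 0 t, G s := by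
        refine integral_mono_of_nonneg ?_ hG.integrableOn ?_ <;>
          refine (ae_restrict_iff' hS).2 (.of_forall fun s hs => ?_) <;>
          dsimp only [Pi.zero_apply] <;> split_ifs with hsum
        · exact Finset.prod_nonneg fun i _ => rpow_nonneg (hs i trivial).1 _
        · exact le_rfl
        · exact prod_rpow_neg_half_le_exp_mul_prod_tiltedDensity (fun i => (hs i trivial).1)
            hsum hl.le
        · exact hG_nonneg s
    _ ≤ ∫ s, G s := setIntegral_le_integral hG (.of_forall hG_nonneg)
    _ = exp (l * t) * (π / l) ^ ((n : ℝ) / 2) := by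
        rw [integral_const_mul, volume_pi, integral_fintype_prod_eq_pow, integral_tiltedDensity hl,
          Fintype.card_fin, ← rpow_natCast, ← rpow_mul (by positivity)]
        ring_nf

/-- **(10.11):** for every `n ≥ 1` and `t > 0`,
`a_n(t) ≤ (π t)^{n/2} · exp(−(n/2)(log(n/2) − 1))`. -/
theorem aFun_le (n : ℕ) (hn : 1 ≤ n) (t : ℝ) (ht : 0 < t) :
    aFun n t ≤ (Real.pi * t) ^ ((n : ℝ) / 2) *
      Real.exp (-((n : ℝ) / 2) * (Real.log ((n : ℝ) / 2) - 1)) := by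
  have hn2 : (0 : ℝ) < n / 2 := by positivity
  calc aFun n t ≤ exp (n / 2 / t * t) * (π / (n / 2 / t)) ^ ((n : ℝ) / 2) :=
        aFun_le_exp_mul_rpow n t (by positivity)
    _ = (π * t) ^ ((n : ℝ) / 2) * (exp (n / 2) / (n / 2 : ℝ) ^ ((n : ℝ) / 2)) := by
        rw [div_mul_cancel₀ _ ht.ne', div_div_eq_mul_div, div_rpow (by positivity) hn2.le]
        ring
    _ = (π * t) ^ ((n : ℝ) / 2) * exp (-((n : ℝ) / 2) * (log ((n : ℝ) / 2) - 1)) := by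
        rw [rpow_def_of_pos hn2, ← exp_sub]
        ring_nf
end

section
/- There is a constant c < ∞ such that for every real t > 0, Σ_{n=1}^{∞} a_n(t) ≤ c · e^{π t}. -/
/-!
By Fubini, `a_{n+1}(t) = ∫₀ᵗ s^{-1/2} a_n(t - s) ds`, and the Beta integral turns this recursion
into Dirichlet's formula `a_n(t) = Γ(1/2)ⁿ t^{n/2} / Γ(n/2 + 1) = (πt)^{n/2} / Γ(n/2 + 1)`.
With `x = πt` the even terms are `xᵏ / k!`, summing to `eˣ`, and log-convexity of `Γ` bounds
each odd term by the sum of its two even neighbours, so the whole series is at most `3eˣ`.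
-/

open MeasureTheory

open Set Real
open scoped ENNReal

def solidSimplex (n : ℕ) (t : ℝ) : Set (Fin n → ℝ) := {s | (∀ i, 0 ≤ s i) ∧ ∑ i, s i ≤ t}

lemma measurableSet_solidSimplex (n : ℕ) (t : ℝ) : MeasurableSet (solidSimplex n t) :=
  (measurableSet_le measurable_const measurable_id).inter
    (measurableSet_le (Finset.measurable_sum _ fun i _ => measurable_pi_apply i) measurable_const)

lemma cons_mem_solidSimplex_iff {n : ℕ} {t s : ℝ} {y : Fin n → ℝ} :
    (Fin.cons s y : Fin (n + 1) → ℝ) ∈ solidSimplex (n + 1) t ↔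
      s ∈ Icc 0 t ∧ y ∈ solidSimplex n (t - s) := by
  simp only [solidSimplex, mem_ofPred_eq, Fin.forall_fin_succ, Fin.sum_univ_succ, Fin.cons_zero,
    Fin.cons_succ, mem_Icc]
  constructor
  · rintro ⟨⟨hs, hy⟩, hsum⟩
    exact ⟨⟨hs, by linarith [Finset.sum_nonneg fun i (_ : i ∈ Finset.univ) => hy i]⟩, hy,
      by linarith⟩
  · rintro ⟨⟨hs, -⟩, hy, hsum⟩
    exact ⟨⟨hs, hy⟩, by linarith⟩

noncomputable def simplexLIntegral (g : ℝ → ℝ≥0∞) (n : ℕ) (t : ℝ) : ℝ≥0∞ :=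
  ∫⁻ s in solidSimplex n t, ∏ i, g (s i)

section

variable {g : ℝ → ℝ≥0∞}

lemma simplexLIntegral_zero {t : ℝ} (ht : 0 ≤ t) : simplexLIntegral g 0 t = 1 := by
  have : solidSimplex 0 t = univ := eq_univ_of_forall fun _ => ⟨finZeroElim, by simpa using ht⟩
  simp [simplexLIntegral, this, volume_pi]

lemma lintegral_cons_indicator_solidSimplex (hg : Measurable g) (n : ℕ) (t s : ℝ) :
    ∫⁻ y : Fin n → ℝ, (solidSimplex (n + 1) t).indicator (fun x => ∏ i, g (x i)) (Fin.cons s y) =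
      (Icc 0 t).indicator (fun s => g s * simplexLIntegral g n (t - s)) s := by
  by_cases hs : s ∈ Icc 0 t
  · rw [indicator_of_mem hs, simplexLIntegral,
      ← lintegral_indicator (measurableSet_solidSimplex _ _),
      ← lintegral_const_mul _ ((by fun_prop : Measurable fun y : Fin n → ℝ => ∏ i, g (y i))
        |>.indicator (measurableSet_solidSimplex _ _))]
    congr 1 with y
    by_cases hy : y ∈ solidSimplex n (t - s)
    · rw [indicator_of_mem (cons_mem_solidSimplex_iff.2 ⟨hs, hy⟩), indicator_of_mem hy,
        Fin.prod_univ_succ]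
      simp
    · rw [indicator_of_notMem (fun h => hy (cons_mem_solidSimplex_iff.1 h).2),
        indicator_of_notMem hy, mul_zero]
  · rw [indicator_of_notMem hs]
    simp only [indicator_of_notMem (fun h => hs (cons_mem_solidSimplex_iff.1 h).1),
      lintegral_zero]

lemma simplexLIntegral_succ (hg : Measurable g) (n : ℕ) (t : ℝ) :
    simplexLIntegral g (n + 1) t = ∫⁻ s in Icc 0 t, g s * simplexLIntegral g n (t - s) := by
  have he := (volume_preserving_piFinSuccAbove (fun _ : Fin (n + 1) => ℝ) 0).symm
  have hmeas := (by fun_prop : Measurable fun x : Fin (n + 1) → ℝ => ∏ i, g (x i)).indicator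
    (measurableSet_solidSimplex (n + 1) t)
  rw [simplexLIntegral, ← lintegral_indicator (measurableSet_solidSimplex _ _),
    ← he.lintegral_comp hmeas, Measure.volume_eq_prod,
    lintegral_prod _ (by exact (hmeas.comp he.measurable).aemeasurable),
    ← lintegral_indicator measurableSet_Icc]
  congr 1 with s
  simp only [MeasurableEquiv.piFinSuccAbove_symm_apply, Fin.insertNthEquiv_zero]
  exact lintegral_cons_indicator_solidSimplex hg n t s

end

lemma integral_rpow_mul_one_sub_rpow {a b : ℝ} (ha : 0 < a) (hb : 0 < b) :
    ∫ u in (0 : ℝ)..1, u ^ (a - 1) * (1 - u) ^ (b - 1) = Gamma a * Gamma b / Gamma (a + b) := by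
  have hbeta : Complex.betaIntegral a b =
      ↑(∫ u in (0 : ℝ)..1, u ^ (a - 1) * (1 - u) ^ (b - 1)) := by
    rw [Complex.betaIntegral, ← intervalIntegral.integral_ofReal]
    refine intervalIntegral.integral_congr fun u hu => ?_
    rw [uIcc_of_le zero_le_one] at hu
    rw [← Complex.ofReal_one, ← Complex.ofReal_sub, ← Complex.ofReal_sub, ← Complex.ofReal_sub,
      ← Complex.ofReal_cpow hu.1, ← Complex.ofReal_cpow (sub_nonneg.2 hu.2), Complex.ofReal_mul]
  have h := Complex.Gamma_mul_Gamma_eq_betaIntegral (s := a) (t := b) (by simpa) (by simpa)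
  rw [hbeta, ← Complex.ofReal_add, Complex.Gamma_ofReal, Complex.Gamma_ofReal,
    Complex.Gamma_ofReal] at h
  rw [eq_div_iff (Gamma_pos_of_pos (add_pos ha hb)).ne', mul_comm]
  exact_mod_cast h.symm

lemma integral_rpow_mul_sub_rpow {a b t : ℝ} (ha : 0 < a) (hb : 0 < b) (ht : 0 < t) :
    ∫ s in (0 : ℝ)..t, s ^ (a - 1) * (t - s) ^ (b - 1) =
      t ^ (a + b - 1) * (Gamma a * Gamma b / Gamma (a + b)) := by
  have hsub := intervalIntegral.smul_integral_comp_mul_left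
    (fun s => s ^ (a - 1) * (t - s) ^ (b - 1)) t (a := 0) (b := 1)
  rw [mul_zero, mul_one] at hsub
  rw [← hsub, ← integral_rpow_mul_one_sub_rpow ha hb, ← intervalIntegral.integral_const_mul,
    smul_eq_mul, ← intervalIntegral.integral_const_mul]
  refine intervalIntegral.integral_congr fun u hu => ?_
  rw [uIcc_of_le zero_le_one] at hu
  rw [show t - t * u = t * (1 - u) by ring, mul_rpow ht.le hu.1, mul_rpow ht.le (sub_nonneg.2 hu.2),
    show a + b - 1 = 1 + (a - 1) + (b - 1) by ring, rpow_add ht, rpow_add ht, rpow_one]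
  ring

lemma simplexLIntegral_rpow_le {a : ℝ} (ha : 0 < a) (n : ℕ) {t : ℝ} (ht : 0 < t) :
    simplexLIntegral (fun s => ENNReal.ofReal (s ^ (a - 1))) n t ≤
      ENNReal.ofReal (Gamma a ^ n * t ^ (n * a) / Gamma (n * a + 1)) := by
  induction n generalizing t with
  | zero => simp [simplexLIntegral_zero ht.le]
  | succ n ih =>
    set C := Gamma a ^ n / Gamma (n * a + 1)
    have hC : 0 ≤ C := by positivity
    set f : ℝ → ℝ := fun s => s ^ (a - 1) * (C * (t - s) ^ (n * a))
    have hf_nonneg : ∀ s ∈ Ioo 0 t, 0 ≤ f s := fun s hs =>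
      mul_nonneg (rpow_nonneg hs.1.le _) (mul_nonneg hC (rpow_nonneg (sub_nonneg.2 hs.2.le) _))
    have hf_int : IntegrableOn f (Ioo 0 t) := by
      rw [← intervalIntegrable_iff_integrableOn_Ioo_of_le ht.le]
      refine (intervalIntegral.intervalIntegrable_rpow' (by linarith)).mul_continuousOn ?_
      exact continuousOn_const.mul
        ((continuousOn_const.sub continuousOn_id).rpow_const fun _ _ => Or.inr (by positivity))
    have hf_integral : ∫ s in Ioo 0 t, f s =
        Gamma a ^ (n + 1) * t ^ (((n + 1 : ℕ) : ℝ) * a) / Gamma (((n + 1 : ℕ) : ℝ) * a + 1) := by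
      rw [← integral_Ioc_eq_integral_Ioo, ← intervalIntegral.integral_of_le ht.le]
      simp only [f, mul_left_comm _ C]
      rw [intervalIntegral.integral_const_mul]
      have hbeta := integral_rpow_mul_sub_rpow ha (b := n * a + 1) (by positivity) ht
      rw [add_sub_cancel_right] at hbeta
      rw [hbeta, Nat.cast_succ, show a + (n * a + 1) - 1 = (n + 1) * a by ring,
        show a + (n * a + 1) = (n + 1) * a + 1 by ring]
      have hΓ := (Gamma_pos_of_pos (show 0 < (n : ℝ) * a + 1 by positivity)).ne'
      simp only [C]
      field_simp
      ring
    rw [simplexLIntegral_succ (by fun_prop), setLIntegral_congr Ioo_ae_eq_Icc.symm]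
    calc ∫⁻ s in Ioo 0 t, ENNReal.ofReal (s ^ (a - 1)) *
          simplexLIntegral (fun s => ENNReal.ofReal (s ^ (a - 1))) n (t - s)
        ≤ ∫⁻ s in Ioo 0 t, ENNReal.ofReal (f s) := by
          refine setLIntegral_mono (by fun_prop) fun s hs => ?_
          rw [ENNReal.ofReal_mul (rpow_nonneg hs.1.le _)]
          refine mul_le_mul_right ((ih (sub_pos.2 hs.2)).trans_eq ?_) _
          rw [mul_div_right_comm]
      _ = ENNReal.ofReal (∫ s in Ioo 0 t, f s) :=
          (ofReal_integral_eq_lintegral_ofReal hf_int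
            (ae_restrict_of_forall_mem measurableSet_Ioo hf_nonneg)).symm
      _ = _ := by rw [hf_integral]

lemma setOf_sum_le_inter_pi_Icc (n : ℕ) (t : ℝ) :
    {s : Fin n → ℝ | ∑ i, s i ≤ t} ∩ univ.pi (fun _ => Icc 0 t) = solidSimplex n t := by
  ext s
  simp only [solidSimplex, mem_inter_iff, mem_ofPred_eq, mem_univ_pi, mem_Icc]
  constructor
  · rintro ⟨hsum, hs⟩
    exact ⟨fun i => (hs i).1, hsum⟩
  · rintro ⟨hs, hsum⟩
    exact ⟨hsum, fun i =>
      ⟨hs i, (Finset.single_le_sum (fun j _ => hs j) (Finset.mem_univ i)).trans hsum⟩⟩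

lemma aFun_eq_toReal_simplexLIntegral (n : ℕ) (t : ℝ) :
    aFun n t = (simplexLIntegral (fun s => ENNReal.ofReal (s ^ (-(1 : ℝ) / 2))) n t).toReal := by
  have hpi : MeasurableSet (univ.pi fun _ : Fin n => Icc (0 : ℝ) t) :=
    MeasurableSet.univ_pi fun _ => measurableSet_Icc
  have hsum : MeasurableSet {s : Fin n → ℝ | ∑ i, s i ≤ t} :=
    measurableSet_le (Finset.measurable_sum _ fun i _ => measurable_pi_apply i) measurable_const
  rw [aFun, integral_eq_lintegral_of_nonneg_ae, simplexLIntegral,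
    ← setOf_sum_le_inter_pi_Icc, ← setLIntegral_indicator hsum]
  · congr 1
    refine setLIntegral_congr_fun hpi fun s hs => ?_
    have hs0 : ∀ i, 0 ≤ s i := fun i => (hs i (mem_univ i)).1
    by_cases h : ∑ i, s i ≤ t
    · rw [if_pos h, indicator_of_mem (show s ∈ {s | ∑ i, s i ≤ t} from h),
        ENNReal.ofReal_prod_of_nonneg fun i _ => rpow_nonneg (hs0 i) _]
    · rw [if_neg h, indicator_of_notMem (show s ∉ {s | ∑ i, s i ≤ t} from h), ENNReal.ofReal_zero]
  · refine ae_restrict_of_forall_mem hpi fun s hs => ?_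
    dsimp only [Pi.zero_apply]
    split_ifs
    exacts [Finset.prod_nonneg fun i _ => rpow_nonneg (hs i (mem_univ i)).1 _, le_rfl]
  · exact (Measurable.ite hsum (Finset.measurable_prod _ fun i _ =>
      (measurable_pi_apply i).pow_const _) measurable_const).aestronglyMeasurable

lemma Gamma_add_one_mul_Gamma_add_two_le {s : ℝ} (hs : 0 ≤ s) :
    Gamma (s + 1) * Gamma (s + 2) ≤ 2 * Gamma (s + 3 / 2) ^ 2 := by
  have hΓ₁ := Gamma_pos_of_pos (show 0 < s + 1 / 2 by positivity)
  have hΓ₃ := Gamma_pos_of_pos (show 0 < s + 3 / 2 by positivity)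
  have hconvex := Gamma_mul_add_mul_le_rpow_Gamma_mul_rpow_Gamma (s := s + 1 / 2) (t := s + 3 / 2)
    (by positivity) (by positivity) one_half_pos one_half_pos (by norm_num)
  rw [show 1 / 2 * (s + 1 / 2) + 1 / 2 * (s + 3 / 2) = s + 1 by ring, ← mul_rpow hΓ₁.le hΓ₃.le,
    ← sqrt_eq_rpow, le_sqrt' (Gamma_pos_of_pos (by positivity))] at hconvex
  have h32 : Gamma (s + 3 / 2) = (s + 1 / 2) * Gamma (s + 1 / 2) := by
    rw [← Gamma_add_one (by positivity)]; ring_nf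
  have h2 : Gamma (s + 2) = (s + 1) * Gamma (s + 1) := by
    rw [← Gamma_add_one (by positivity)]; ring_nf
  rw [h32] at hconvex
  rw [h2, h32]
  nlinarith [mul_le_mul_of_nonneg_left hconvex (by positivity : (0 : ℝ) ≤ s + 1),
    mul_nonneg (mul_pos hΓ₁ hΓ₁).le (by positivity : (0 : ℝ) ≤ s + 1 / 2)]

noncomputable def powDivGamma (x r : ℝ) : ℝ := x ^ r / Gamma (r + 1)

lemma powDivGamma_nonneg {x r : ℝ} (hx : 0 ≤ x) (hr : 0 ≤ r) : 0 ≤ powDivGamma x r :=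
  div_nonneg (rpow_nonneg hx _) (Gamma_pos_of_pos (by positivity)).le

lemma powDivGamma_natCast (x : ℝ) (k : ℕ) : powDivGamma x k = x ^ k / k.factorial := by
  rw [powDivGamma, rpow_natCast, Gamma_nat_eq_factorial]

lemma hasSum_powDivGamma_natCast (x : ℝ) : HasSum (fun k : ℕ => powDivGamma x k) (exp x) := by
  simpa only [powDivGamma_natCast, exp_eq_exp_ℝ] using NormedSpace.expSeries_div_hasSum_exp x

lemma powDivGamma_add_half_le {x s : ℝ} (hx : 0 ≤ x) (hs : 0 ≤ s) :
    powDivGamma x (s + 1 / 2) ≤ powDivGamma x s + powDivGamma x (s + 1) := by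
  have hxx : x ^ (s + 1 / 2) * x ^ (s + 1 / 2) = x ^ s * x ^ (s + 1) := by
    rw [← rpow_add' hx (by linarith), ← rpow_add' hx (by linarith)]
    ring_nf
  have hsq : powDivGamma x (s + 1 / 2) ^ 2 ≤ 2 * powDivGamma x s * powDivGamma x (s + 1) :=
    calc powDivGamma x (s + 1 / 2) ^ 2
        = x ^ s * x ^ (s + 1) / Gamma (s + 3 / 2) ^ 2 := by
          rw [powDivGamma, div_pow, sq, hxx]
          ring_nf
      _ ≤ x ^ s * x ^ (s + 1) / (Gamma (s + 1) * Gamma (s + 2) / 2) := by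
          refine div_le_div_of_nonneg_left (by positivity) (by positivity) ?_
          linarith [Gamma_add_one_mul_Gamma_add_two_le hs]
      _ = 2 * powDivGamma x s * powDivGamma x (s + 1) := by
          rw [powDivGamma, powDivGamma, show s + 1 + 1 = s + 2 by ring]
          field_simp
  have hA := powDivGamma_nonneg hx hs
  have hB := powDivGamma_nonneg hx (show 0 ≤ s + 1 by positivity)
  refine (pow_le_pow_iff_left₀ (powDivGamma_nonneg hx (by positivity)) (add_nonneg hA hB)
    two_ne_zero).1 ?_
  nlinarith [sq_nonneg (powDivGamma x s - powDivGamma x (s + 1))]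

lemma summable_powDivGamma_half_and_tsum_le {x : ℝ} (hx : 0 ≤ x) :
    Summable (fun n : ℕ => powDivGamma x (n / 2)) ∧
      ∑' n : ℕ, powDivGamma x (n / 2) ≤ 3 * exp x := by
  set f : ℕ → ℝ := fun n => powDivGamma x (n / 2)
  have hexp := hasSum_powDivGamma_natCast x
  have hshift : Summable fun k : ℕ => powDivGamma x (k + 1 : ℕ) :=
    (summable_nat_add_iff 1).2 hexp.summable
  have heven : (fun k => f (2 * k)) = fun k : ℕ => powDivGamma x k := by
    ext k
    simp only [f]
    push_cast
    ring_nf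
  have hodd (k : ℕ) : f (2 * k + 1) ≤ powDivGamma x k + powDivGamma x (k + 1 : ℕ) := by
    simp only [f]
    rw [show ((2 * k + 1 : ℕ) : ℝ) / 2 = k + 1 / 2 by push_cast; ring, Nat.cast_succ]
    exact powDivGamma_add_half_le hx k.cast_nonneg
  have hs_even : Summable fun k => f (2 * k) := by
    rw [heven]
    exact hexp.summable
  have hs_odd : Summable fun k => f (2 * k + 1) :=
    (hexp.summable.add hshift).of_nonneg_of_le
      (fun k => powDivGamma_nonneg hx (by positivity)) hodd
  have hshift_le : ∑' k : ℕ, powDivGamma x (k + 1 : ℕ) ≤ exp x :=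
    (tsum_comp_le_tsum_of_inj hexp.summable
      (fun k => powDivGamma_nonneg hx k.cast_nonneg) (add_left_injective 1)).trans_eq hexp.tsum_eq
  have hodd_le := hs_odd.tsum_le_tsum hodd (hexp.summable.add hshift)
  rw [hexp.summable.tsum_add hshift, hexp.tsum_eq] at hodd_le
  refine ⟨hs_even.even_add_odd hs_odd, ?_⟩
  rw [← tsum_even_add_odd hs_even hs_odd, heven, hexp.tsum_eq]
  linarith

lemma aFun_nonneg (n : ℕ) (t : ℝ) : 0 ≤ aFun n t := by
  rw [aFun_eq_toReal_simplexLIntegral]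
  exact ENNReal.toReal_nonneg

lemma aFun_le_powDivGamma (n : ℕ) {t : ℝ} (ht : 0 < t) :
    aFun n t ≤ powDivGamma (π * t) (n / 2) := by
  rw [aFun_eq_toReal_simplexLIntegral, show -(1 : ℝ) / 2 = 1 / 2 - 1 by norm_num]
  refine ENNReal.toReal_le_of_le_ofReal (powDivGamma_nonneg (by positivity) (by positivity))
    ((simplexLIntegral_rpow_le one_half_pos n ht).trans_eq ?_)
  rw [powDivGamma, Gamma_one_half_eq, sqrt_eq_rpow, ← rpow_natCast, ← rpow_mul pi_pos.le,
    mul_rpow pi_pos.le ht.le]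
  ring_nf

/-- **(10.12):** there is a constant `c` such that `Σ_{n≥1} a_n(t) ≤ c·e^{πt}` for every
`t > 0` (the series being summable). -/
theorem tsum_aFun_le : ∃ c : ℝ, ∀ t : ℝ, 0 < t →
    (Summable fun n : ℕ => aFun (n + 1) t) ∧
      (∑' n : ℕ, aFun (n + 1) t) ≤ c * Real.exp (Real.pi * t) := by
  refine ⟨3, fun t ht => ?_⟩
  obtain ⟨hsum, hle⟩ := summable_powDivGamma_half_and_tsum_le (mul_pos pi_pos ht).le
  have hbound (n : ℕ) : aFun (n + 1) t ≤ powDivGamma (π * t) ((n + 1 : ℕ) / 2) :=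
    aFun_le_powDivGamma (n + 1) ht
  have hsum_succ : Summable fun n : ℕ => powDivGamma (π * t) ((n + 1 : ℕ) / 2) :=
    hsum.comp_injective (add_left_injective 1)
  have hsummable := hsum_succ.of_nonneg_of_le (fun n => aFun_nonneg _ _) hbound
  refine ⟨hsummable, ?_⟩
  calc ∑' n : ℕ, aFun (n + 1) t
      ≤ ∑' n : ℕ, powDivGamma (π * t) ((n + 1 : ℕ) / 2) := hsummable.tsum_le_tsum hbound hsum_succ
    _ ≤ ∑' n : ℕ, powDivGamma (π * t) (n / 2) :=
        tsum_comp_le_tsum_of_inj hsum (fun n => powDivGamma_nonneg (by positivity) (by positivity))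
          (add_left_injective 1)
    _ ≤ 3 * exp (π * t) := hle
end

section
/- For every integer n ≥ 1, every real t > 0 and every real α > 0, a_n(t) ≤ t^{n/2} · e^{α} · (π/α)^{n/2}. -/
open MeasureTheory

/-!
Exponential tilting. With `c = α / t`, the weight `exp (c (t - ∑ sᵢ))` is at least `1` on the simplex
`∑ sᵢ ≤ t`; inserting it and enlarging the domain to the whole orthant makes the integral factorise,
so `a_n(t) ≤ e^α (∫₀^∞ x^{-1/2} e^{-cx} dx)^n = e^α (Γ(1/2) c^{-1/2})^n = e^α (π t / α)^{n/2}`.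
-/

open Real Set

section

variable {ι : Type*} [Fintype ι] {f : ℝ → ℝ} {c t : ℝ}

theorem prod_le_exp_mul_prod_mul_exp_neg (hc : 0 ≤ c) {s : ι → ℝ} (hs : ∑ i, s i ≤ t)
    (hf : ∀ i, 0 ≤ f (s i)) :
    ∏ i, f (s i) ≤ exp (c * t) * ∏ i, (f (s i) * exp (-(c * s i))) := by
  have hexp : ∏ i, exp (-(c * s i)) = exp (-(c * ∑ i, s i)) := by
    rw [← exp_sum, Finset.mul_sum, Finset.sum_neg_distrib]
  calc ∏ i, f (s i)
      = exp (c * ∑ i, s i) * ∏ i, (f (s i) * exp (-(c * s i))) := by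
        rw [Finset.prod_mul_distrib, hexp, mul_left_comm, ← exp_add, add_neg_cancel, exp_zero,
          mul_one]
    _ ≤ exp (c * t) * ∏ i, (f (s i) * exp (-(c * s i))) := by
        gcongr
        exact Finset.prod_nonneg fun i _ => mul_nonneg (hf i) (exp_nonneg _)

theorem setIntegral_simplex_prod_le (hc : 0 ≤ c) (hf : ∀ x, 0 ≤ x → 0 ≤ f x)
    (hint : IntegrableOn (fun x => f x * exp (-(c * x))) (Ioi 0)) :
    ∫ s in univ.pi (fun _ : ι => Icc (0 : ℝ) t), (if ∑ i, s i ≤ t then ∏ i, f (s i) else 0) ≤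
      exp (c * t) * (∫ x in Ioi 0, f x * exp (-(c * x))) ^ Fintype.card ι := by
  set g : ℝ → ℝ := fun x => f x * exp (-(c * x))
  set G : (ι → ℝ) → ℝ := fun s => exp (c * t) * ∏ i, g (s i)
  have hbox : MeasurableSet (univ.pi fun _ : ι => Icc (0 : ℝ) t) :=
    .univ_pi fun _ => measurableSet_Icc
  have horthant : volume.restrict (univ.pi fun _ : ι => Ici (0 : ℝ)) =
      Measure.pi fun _ => volume.restrict (Ici 0) := by
    rw [volume_pi, Measure.restrict_pi_pi]
  have hG : IntegrableOn G (univ.pi fun _ : ι => Ici (0 : ℝ)) := by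
    rw [IntegrableOn, horthant]
    exact (Integrable.fintype_prod fun _ =>
      (integrableOn_Ici_iff_integrableOn_Ioi).mpr hint).const_mul _
  have hG_nonneg : ∀ s ∈ univ.pi (fun _ : ι => Ici (0 : ℝ)), 0 ≤ G s := fun s hs =>
    mul_nonneg (exp_nonneg _) <|
      Finset.prod_nonneg fun i _ => mul_nonneg (hf _ (hs i trivial)) (exp_nonneg _)
  calc _ ≤ ∫ s in univ.pi (fun _ : ι => Icc (0 : ℝ) t), G s := by
        refine integral_mono_of_nonneg (ae_restrict_of_forall_mem hbox fun s hs => ?_)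
          (hG.mono_set ?_) (ae_restrict_of_forall_mem hbox fun s hs => ?_)
        · dsimp only [Pi.zero_apply]
          split_ifs
          · exact Finset.prod_nonneg fun i _ => hf _ (hs i trivial).1
          · exact le_rfl
        · exact pi_mono fun _ _ => Icc_subset_Ici_self
        · dsimp only
          split_ifs with hsum
          · exact prod_le_exp_mul_prod_mul_exp_neg hc hsum fun i => hf _ (hs i trivial).1
          · exact hG_nonneg s fun i _ => (hs i trivial).1
    _ ≤ ∫ s in univ.pi (fun _ : ι => Ici (0 : ℝ)), G s :=
        setIntegral_mono_set hG
          (ae_restrict_of_forall_mem (.univ_pi fun _ => measurableSet_Ici) hG_nonneg)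
          (pi_mono fun _ _ => Icc_subset_Ici_self).eventuallyLE
    _ = _ := by
        rw [horthant, integral_const_mul, integral_fintype_prod_eq_pow, integral_Ici_eq_integral_Ioi]

theorem integrableOn_rpow_neg_half_mul_exp_neg_mul (hc : 0 < c) :
    IntegrableOn (fun x : ℝ => x ^ (-(1 : ℝ) / 2) * exp (-(c * x))) (Ioi 0) := by
  simpa only [rpow_one, neg_mul] using
    integrableOn_rpow_mul_exp_neg_mul_rpow (by norm_num : -1 < -(1 : ℝ) / 2) one_pos hc

theorem integral_rpow_neg_half_mul_exp_neg_mul (hc : 0 < c) :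
    ∫ x in Ioi 0, x ^ (-(1 : ℝ) / 2) * exp (-(c * x)) = sqrt (π / c) := by
  have h := integral_rpow_mul_exp_neg_mul_Ioi (a := 1 / 2) (by norm_num) hc
  rw [show (1 : ℝ) / 2 - 1 = -1 / 2 by norm_num, Gamma_one_half_eq] at h
  rw [h, sqrt_eq_rpow, sqrt_eq_rpow, div_eq_mul_one_div π, mul_rpow pi_pos.le (by positivity),
    mul_comm]

end

theorem aFun_le_of_alpha_general (n : ℕ) (t : ℝ) (ht : 0 < t) (α : ℝ) (hα : 0 < α) :
    aFun n t ≤ t ^ ((n : ℝ) / 2) * Real.exp α * (Real.pi / α) ^ ((n : ℝ) / 2) := by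
  have hc : 0 < α / t := div_pos hα ht
  calc aFun n t
      ≤ exp (α / t * t) *
          (∫ x in Ioi 0, x ^ (-(1 : ℝ) / 2) * exp (-(α / t * x))) ^ Fintype.card (Fin n) :=
        setIntegral_simplex_prod_le hc.le (fun x hx => rpow_nonneg hx _)
          (integrableOn_rpow_neg_half_mul_exp_neg_mul hc)
    _ = exp α * sqrt (t * (π / α)) ^ n := by
        rw [integral_rpow_neg_half_mul_exp_neg_mul hc, div_mul_cancel₀ _ ht.ne', Fintype.card_fin,
          div_div_eq_mul_div, mul_div_assoc, mul_div_left_comm]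
    _ = t ^ ((n : ℝ) / 2) * exp α * (π / α) ^ ((n : ℝ) / 2) := by
        rw [sqrt_eq_rpow, ← rpow_natCast, ← rpow_mul (by positivity),
          mul_rpow ht.le (by positivity), one_div_mul_eq_div]
        ring

/-- **(10.15):** for every `n ≥ 1`, `t > 0` and `α > 0`,
`a_n(t) ≤ t^{n/2} · e^α · (π/α)^{n/2}`. -/
theorem aFun_le_of_alpha (n : ℕ) (hn : 1 ≤ n) (t : ℝ) (ht : 0 < t) (α : ℝ) (hα : 0 < α) :
    aFun n t ≤ t ^ ((n : ℝ) / 2) * Real.exp α * (Real.pi / α) ^ ((n : ℝ) / 2) :=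
  aFun_le_of_alpha_general n t ht α hα
end

section
/- Dirichlet-type simplex integral: let m ≥ 1 be an integer, t > 0 a real, and α_1, …, α_m real numbers with α_i < 1 for every i. Then, with the convention t_0 = 0, ∫_{0 ≤ t_1 ≤ t_2 ≤ ⋯ ≤ t_m ≤ t} ∏_{i=1}^m (t_i − t_{i−1})^{−α_i} dt_1 ⋯ dt_m = [∏_{i=1}^m Γ(1−α_i) / Γ(1 + m − Σ_{i=1}^m α_i)] · t^{m − Σ_{i=1}^m α_i}; in particular the integral is finite, and it equals a constant depending only on α_1,…,α_m times t^{m − Σα_i}. -/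
/-!
Fixing the first coordinate `t₁ = x` and translating the remaining ones by `x` turns the integral
over the `(m+1)`-simplex of size `t` into `∫₀ᵗ x^(-α₁) I_m(t - x) dx`, where `I_m` is the integral
for the exponents `α₂, …, α_{m+1}`. By induction `I_m(s)` is a constant times `s^(m - Σ αᵢ)`, so
this is a Beta integral `∫₀ᵗ x^(a-1) (t-x)^(b-1) dx = Γ(a)Γ(b)/Γ(a+b) · t^(a+b-1)`, and the Gamma
factors telescope.
-/

open MeasureTheory

/-- The "previous" coordinate: `prevC s i = s (i-1)`, with the convention that it is `0`
when `i = 0` (so that the coordinates represent `0 = t_0 ≤ t_1 ≤ ⋯ ≤ t_m`). -/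
def prevC {m : ℕ} (s : Fin m → ℝ) (i : Fin m) : ℝ :=
  if (i : ℕ) = 0 then 0
  else s ⟨(i : ℕ) - 1, Nat.lt_of_le_of_lt (Nat.sub_le _ _) i.2⟩

/-- The ordered simplex `{0 ≤ t_1 ≤ t_2 ≤ ⋯ ≤ t_m ≤ t}`. -/
def orderedSimplex (m : ℕ) (t : ℝ) : Set (Fin m → ℝ) :=
  {s | (∀ i : Fin m, prevC s i ≤ s i) ∧ ∀ i : Fin m, s i ≤ t}

open scoped ENNReal
open Real Set

theorem integral_rpow_mul_rpow_sub {a b t : ℝ} (ha : 0 < a) (hb : 0 < b) (ht : 0 < t) :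
    ∫ x in (0 : ℝ)..t, x ^ (a - 1) * (t - x) ^ (b - 1)
      = Gamma a * Gamma b / Gamma (a + b) * t ^ (a + b - 1) := by
  have hcast : ((∫ x in (0 : ℝ)..t, x ^ (a - 1) * (t - x) ^ (b - 1) : ℝ) : ℂ)
      = ∫ x in (0 : ℝ)..t, (x : ℂ) ^ ((a : ℂ) - 1) * ((t : ℂ) - x) ^ ((b : ℂ) - 1) := by
    rw [← intervalIntegral.integral_ofReal]
    refine intervalIntegral.integral_congr fun x hx => ?_
    rw [uIcc_of_le ht.le] at hx
    push_cast [Complex.ofReal_cpow hx.1, Complex.ofReal_cpow (sub_nonneg.2 hx.2)]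
    rfl
  apply Complex.ofReal_injective
  rw [hcast, Complex.betaIntegral_scaled _ _ ht, Complex.betaIntegral_eq_Gamma_mul_div _ _
    (by simpa using ha) (by simpa using hb)]
  push_cast [Complex.ofReal_cpow ht.le, ← Complex.Gamma_ofReal]
  ring

theorem lintegral_Ioo_rpow_mul_rpow_sub {a b t : ℝ} (ha : 0 < a) (hb : 0 < b) (ht : 0 < t) :
    ∫⁻ x in Ioo 0 t, ENNReal.ofReal (x ^ (a - 1) * (t - x) ^ (b - 1))
      = ENNReal.ofReal (Gamma a * Gamma b / Gamma (a + b) * t ^ (a + b - 1)) := by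
  have hpos : 0 < Gamma a * Gamma b / Gamma (a + b) * t ^ (a + b - 1) :=
    mul_pos (div_pos (mul_pos (Gamma_pos_of_pos ha) (Gamma_pos_of_pos hb))
      (Gamma_pos_of_pos (add_pos ha hb))) (rpow_pos_of_pos ht _)
  rw [← integral_rpow_mul_rpow_sub ha hb ht] at hpos ⊢
  -- integrability for free: a non-integrable function would have integral `0`
  have hint := intervalIntegral.intervalIntegrable_of_integral_ne_zero hpos.ne'
  rw [intervalIntegrable_iff_integrableOn_Ioo_of_le ht.le] at hint
  rw [intervalIntegral.integral_of_le ht.le, integral_Ioc_eq_integral_Ioo,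
    ofReal_integral_eq_lintegral_ofReal hint]
  refine (ae_restrict_iff' measurableSet_Ioo).2 (.of_forall fun x hx => ?_)
  exact mul_nonneg (rpow_nonneg hx.1.le _) (rpow_nonneg (sub_nonneg.2 hx.2.le) _)

theorem lintegral_pi_fin_succ_cons {X : Type*} [MeasurableSpace X] (μ : Measure X)
    [SigmaFinite μ] {m : ℕ} {f : (Fin (m + 1) → X) → ℝ≥0∞} (hf : Measurable f) :
    ∫⁻ s, f s ∂(Measure.pi fun _ => μ)
      = ∫⁻ x, ∫⁻ y, f (Fin.cons x y) ∂(Measure.pi fun _ => μ) ∂μ := by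
  let e := MeasurableEquiv.piFinSuccAbove (fun _ : Fin (m + 1) => X) 0
  rw [← ((measurePreserving_piFinSuccAbove (fun _ => μ) 0).symm).lintegral_comp hf]
  refine (lintegral_prod (fun p => f (e.symm p)) (hf.comp e.symm.measurable).aemeasurable).trans ?_
  simp_rw [e, MeasurableEquiv.piFinSuccAbove_symm_apply, Fin.insertNthEquiv,
    Equiv.coe_fn_mk, Fin.insertNth_zero']

noncomputable def dirichletKernel {m : ℕ} (α : Fin m → ℝ) (s : Fin m → ℝ) : ℝ :=
  ∏ i, (s i - prevC s i) ^ (-α i)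

theorem measurable_prevC {m : ℕ} (i : Fin m) : Measurable fun s : Fin m → ℝ => prevC s i := by
  unfold prevC
  split_ifs
  · exact measurable_const
  · exact measurable_pi_apply _

theorem measurable_dirichletKernel {m : ℕ} (α : Fin m → ℝ) : Measurable (dirichletKernel α) :=
  Finset.measurable_prod _ fun i _ =>
    ((measurable_pi_apply i).sub (measurable_prevC i)).pow_const _

theorem measurableSet_orderedSimplex (m : ℕ) (t : ℝ) : MeasurableSet (orderedSimplex m t) := by
  simp only [orderedSimplex, ofPred_and, ofPred_forall]
  exact (MeasurableSet.iInter fun i =>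
      measurableSet_le (measurable_prevC i) (measurable_pi_apply i)).inter
    (MeasurableSet.iInter fun i => measurableSet_le (measurable_pi_apply i) measurable_const)

theorem prevC_cons_zero {m : ℕ} (x : ℝ) (y : Fin m → ℝ) : prevC (Fin.cons x y) 0 = 0 := rfl

theorem prevC_cons_add_succ {m : ℕ} (x : ℝ) (z : Fin m → ℝ) (i : Fin m) :
    prevC (Fin.cons x fun j => z j + x) i.succ = prevC z i + x := by
  rcases i with ⟨_ | k, hk⟩
  · simp [prevC]
  · rfl

theorem cons_add_mem_orderedSimplex_iff {m : ℕ} (t x : ℝ) (z : Fin m → ℝ) :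
    (Fin.cons x fun j => z j + x) ∈ orderedSimplex (m + 1) t
      ↔ x ∈ Icc 0 t ∧ z ∈ orderedSimplex m (t - x) := by
  simp only [orderedSimplex, mem_ofPred_eq, Fin.forall_fin_succ, prevC_cons_add_succ,
    Fin.cons_succ, Fin.cons_zero, prevC_cons_zero, mem_Icc, add_le_add_iff_right,
    le_sub_iff_add_le]
  tauto

theorem dirichletKernel_cons_add {m : ℕ} (α : Fin (m + 1) → ℝ) (x : ℝ) (z : Fin m → ℝ) :
    dirichletKernel α (Fin.cons x fun j => z j + x)
      = x ^ (-α 0) * dirichletKernel (Fin.tail α) z := by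
  simp only [dirichletKernel, Fin.prod_univ_succ, Fin.cons_zero, prevC_cons_zero, sub_zero,
    Fin.cons_succ, prevC_cons_add_succ, add_sub_add_right_eq_sub, Fin.tail]

theorem indicator_orderedSimplex_cons_add {m : ℕ} (t : ℝ) (α : Fin (m + 1) → ℝ) (x : ℝ)
    (z : Fin m → ℝ) :
    (orderedSimplex (m + 1) t).indicator (fun s => ENNReal.ofReal (dirichletKernel α s))
        (Fin.cons x fun j => z j + x)
      = (Icc 0 t).indicator (fun x => ENNReal.ofReal (x ^ (-α 0))) x
        * (orderedSimplex m (t - x)).indicator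
            (fun z => ENNReal.ofReal (dirichletKernel (Fin.tail α) z)) z := by
  by_cases hx : x ∈ Icc 0 t
  · by_cases hz : z ∈ orderedSimplex m (t - x) <;>
      simp [indicator, cons_add_mem_orderedSimplex_iff, hx, hz, dirichletKernel_cons_add,
        ENNReal.ofReal_mul (rpow_nonneg hx.1 _)]
  · simp [indicator, cons_add_mem_orderedSimplex_iff, hx]

theorem lintegral_orderedSimplex_succ {m : ℕ} (t : ℝ) (α : Fin (m + 1) → ℝ) :
    ∫⁻ s in orderedSimplex (m + 1) t, ENNReal.ofReal (dirichletKernel α s)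
      = ∫⁻ x in Icc 0 t, ENNReal.ofReal (x ^ (-α 0))
          * ∫⁻ z in orderedSimplex m (t - x), ENNReal.ofReal (dirichletKernel (Fin.tail α) z) := by
  rw [← lintegral_indicator (measurableSet_orderedSimplex _ _), volume_pi,
    lintegral_pi_fin_succ_cons _ (((measurable_dirichletKernel α).ennreal_ofReal).indicator
      (measurableSet_orderedSimplex _ _)), ← lintegral_indicator measurableSet_Icc]
  refine lintegral_congr fun x => ?_
  rw [← lintegral_add_right_eq_self _ fun _ => x]
  simp only [Pi.add_def, indicator_orderedSimplex_cons_add]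
  rw [lintegral_const_mul _ (((measurable_dirichletKernel _).ennreal_ofReal).indicator
      (measurableSet_orderedSimplex _ _)), lintegral_indicator (measurableSet_orderedSimplex _ _),
    ← volume_pi, indicator_mul_left]

theorem lintegral_orderedSimplex_dirichletKernel (m : ℕ) {t : ℝ} (ht : 0 < t) (α : Fin m → ℝ)
    (hα : ∀ i, α i < 1) :
    ∫⁻ s in orderedSimplex m t, ENNReal.ofReal (dirichletKernel α s)
      = ENNReal.ofReal
          ((∏ i, Gamma (1 - α i)) / Gamma (1 + m - ∑ i, α i) * t ^ ((m : ℝ) - ∑ i, α i)) := by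
  induction m generalizing t with
  | zero => simp [orderedSimplex, dirichletKernel, volume_pi]
  | succ m ih =>
    have hsum : ∑ i, α i = α 0 + ∑ i, Fin.tail α i := Fin.sum_univ_succ α
    have hprod : ∏ i, Gamma (1 - α i) = Gamma (1 - α 0) * ∏ i, Gamma (1 - Fin.tail α i) :=
      Fin.prod_univ_succ _
    set S := ∑ i, Fin.tail α i
    set P := ∏ i, Gamma (1 - Fin.tail α i)
    have ha : 0 < 1 - α 0 := sub_pos.2 (hα 0)
    have hb : 0 < 1 + m - S := by
      have : S ≤ ∑ _ : Fin m, (1 : ℝ) := Finset.sum_le_sum fun i _ => (hα _).le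
      simp only [Finset.sum_const, Finset.card_univ, Fintype.card_fin, nsmul_eq_mul,
        mul_one] at this
      linarith
    have hc : 0 ≤ P / Gamma (1 + m - S) :=
      div_nonneg (Finset.prod_nonneg fun i _ => (Gamma_pos_of_pos (sub_pos.2 (hα _))).le)
        (Gamma_pos_of_pos hb).le
    calc ∫⁻ s in orderedSimplex (m + 1) t, ENNReal.ofReal (dirichletKernel α s)
        = ∫⁻ x in Ioo 0 t, ENNReal.ofReal (x ^ (-α 0))
          * ∫⁻ z in orderedSimplex m (t - x), ENNReal.ofReal (dirichletKernel (Fin.tail α) z) := by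
          rw [lintegral_orderedSimplex_succ, setLIntegral_congr Ioo_ae_eq_Icc]
      _ = ∫⁻ x in Ioo 0 t, ENNReal.ofReal (P / Gamma (1 + m - S))
          * ENNReal.ofReal (x ^ ((1 - α 0) - 1) * (t - x) ^ ((1 + m - S) - 1)) := by
          refine setLIntegral_congr_fun measurableSet_Ioo fun x hx => ?_
          rw [ih (sub_pos.2 hx.2) (Fin.tail α) fun i => hα _,
            ← ENNReal.ofReal_mul (rpow_nonneg hx.1.le _), ← ENNReal.ofReal_mul hc,
            sub_sub_cancel_left, show (1 : ℝ) + m - S - 1 = m - S by ring]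
          congr 1
          ring
      _ = ENNReal.ofReal (P / Gamma (1 + m - S))
          * ENNReal.ofReal (Gamma (1 - α 0) * Gamma (1 + m - S) / Gamma ((1 - α 0) + (1 + m - S))
            * t ^ ((1 - α 0) + (1 + m - S) - 1)) := by
          rw [lintegral_const_mul' _ _ ENNReal.ofReal_ne_top,
            lintegral_Ioo_rpow_mul_rpow_sub ha hb ht]
      _ = _ := by
          rw [← ENNReal.ofReal_mul hc, hprod, hsum,
            show 1 - α 0 + (1 + m - S) = 1 + ((m + 1 : ℕ) : ℝ) - (α 0 + S) by push_cast; ring,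
            show 1 + ((m + 1 : ℕ) : ℝ) - (α 0 + S) - 1 = (m + 1 : ℕ) - (α 0 + S) by ring]
          field_simp [(Gamma_pos_of_pos hb).ne']

theorem simplex_integral_eq_general (m : ℕ) (t : ℝ) (ht : 0 < t)
    (α : Fin m → ℝ) (hα : ∀ i, α i < 1) :
    (∫⁻ s in orderedSimplex m t,
        ENNReal.ofReal (∏ i, (s i - prevC s i) ^ (-(α i))))
      = ENNReal.ofReal
          ((∏ i, Real.Gamma (1 - α i)) / Real.Gamma (1 + m - ∑ i, α i)
            * t ^ ((m : ℝ) - ∑ i, α i)) :=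
  lintegral_orderedSimplex_dirichletKernel m ht α hα

/-- **Dirichlet-type simplex integral:** for `m ≥ 1`, `t > 0` and real exponents
`α i < 1`, the integral over `{0 ≤ t_1 ≤ ⋯ ≤ t_m ≤ t}` of `∏ (t_i − t_{i−1})^{−α_i}`
equals `(∏ Γ(1−α_i) / Γ(1 + m − Σα_i)) · t^{m−Σα_i}`; in particular it is finite. -/
theorem simplex_integral_eq (m : ℕ) (hm : 1 ≤ m) (t : ℝ) (ht : 0 < t)
    (α : Fin m → ℝ) (hα : ∀ i, α i < 1) :
    (∫⁻ s in orderedSimplex m t,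
        ENNReal.ofReal (∏ i, (s i - prevC s i) ^ (-(α i))))
      = ENNReal.ofReal
          ((∏ i, Real.Gamma (1 - α i)) / Real.Gamma (1 + m - ∑ i, α i)
            * t ^ ((m : ℝ) - ∑ i, α i)) :=
  simplex_integral_eq_general m t ht α hα
end
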